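/- Let N be a stable 3-pair network and let i, j, l be pairwise distinct indices in {1,2,3} with j ∈ m_{i,j}^i and l ∈ m_{i,l}^i (i.e., ℓ^{i,j}(P_{s_j,t_i}) = 1 and ℓ^{i,l}(P_{s_l,t_i}) = 1). Then every s ∈ S_N with α(s) = 3 contains a diagonal element: if a single arc of N is traversed by three paths P_{s_{l_1},t_1}, P_{s_{l_2},t_2}, P_{s_{l_3},t_3}, then l_m = m for some m ∈ {1,2,3}. -/

import Mathlib

/-! If `ℓ^{i,j}(P_{s_j,t_i}) = 1`, then `P_{s_j,t_i}` shares no vertex with a path `P_{s_b,t_j}`,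
`b ≠ j`: it already has an l.c.s. with `P_{s_j,t_j}` through `s_j`, and a common vertex would
give a second one, avoiding `s_j` because no path meets a source other than its own.
Now let an arc carry `P_{s_{X d},t_d}` for every sink `d`, with `X` fixed-point free. Then
`X i ∈ {j, l}`, say `X i = j`, and the arc lies on `P_{s_j,t_i}` and on `P_{s_{X j},t_j}` with
`X j ≠ j`, which is impossible. An arc with `α = 3` is such an arc, since the paths towards one
sink are arc-disjoint. -/

open scoped BigOperators

/-- A `k`-pair network: a finite DAG with `k` sources of in-degree 0 and
`k` sinks of out-degree 0. -/
structure KPairNetwork (k : ℕ) where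
  V : Type
  A : Type
  [fintypeV : Fintype V]
  [fintypeA : Fintype A]
  [decEqV : DecidableEq V]
  [decEqA : DecidableEq A]
  tail : A → V
  head : A → V
  /-- acyclicity, via a topological ordering of the vertices -/
  acyclic : ∃ ord : V → ℕ, ∀ a : A, ord (tail a) < ord (head a)
  src : Fin k → V
  snk : Fin k → V
  src_inj : Function.Injective src
  snk_inj : Function.Injective snk
  src_no_in : ∀ (i : Fin k) (a : A), head a ≠ src i
  snk_no_out : ∀ (i : Fin k) (a : A), tail a ≠ snk i

attribute [instance] KPairNetwork.fintypeV KPairNetwork.fintypeA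
attribute [instance] KPairNetwork.decEqV KPairNetwork.decEqA

namespace KPairNetwork

variable {k : ℕ} (N : KPairNetwork k)

/-- `l` is (the list of arcs of) a directed path from `u` to `v`. -/
def IsPathFrom (u v : N.V) (l : List N.A) : Prop :=
  l ≠ [] ∧ l.Chain' (fun a b => N.head a = N.tail b) ∧
    (∀ a ∈ l.head?, N.tail a = u) ∧ (∀ a ∈ l.getLast?, N.head a = v)

/-- The vertices lying on a (nonempty) list of arcs. -/
def pathVerts (l : List N.A) : Set N.V :=
  {v | ∃ a ∈ l, v = N.tail a ∨ v = N.head a}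

/-- `P i j` is a path from `s i` to `t j`, and for each sink `j` the `k`
paths `P · j` are pairwise arc-disjoint (strong reachability). -/
def IsStrongSystem (P : Fin k → Fin k → List N.A) : Prop :=
  (∀ i j, N.IsPathFrom (N.src i) (N.snk j) (P i j)) ∧
    ∀ (j i i' : Fin k), i ≠ i' → ∀ a : N.A, a ∈ P i j → a ∉ P i' j

/-- Extra strong reachability: in addition, for each sink `j`, two distinct
paths towards `t j` share no vertex other than `t j`. -/
def IsExtraStrongSystem (P : Fin k → Fin k → List N.A) : Prop :=
  N.IsStrongSystem P ∧
    ∀ (j i i' : Fin k), i ≠ i' →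
      ∀ v : N.V, v ∈ N.pathVerts (P i j) → v ∈ N.pathVerts (P i' j) → v = N.snk j

/-- Stability: the choice of the `k` pairwise arc-disjoint paths towards each
sink is unique. -/
def IsStableSystem (P : Fin k → Fin k → List N.A) : Prop :=
  N.IsStrongSystem P ∧
    ∀ (j : Fin k) (Q : Fin k → List N.A),
      (∀ i, N.IsPathFrom (N.src i) (N.snk j) (Q i)) →
      (∀ i i', i ≠ i' → ∀ a : N.A, a ∈ Q i → a ∉ Q i') →
      ∀ i, Q i = P i j

/-- `excess_f(v) = Σ_{head a = v} f a − Σ_{tail a = v} f a`. -/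
noncomputable def excess (f : N.A → ℝ) (v : N.V) : ℝ :=
  (∑ a : N.A, if N.head a = v then f a else 0) -
    (∑ a : N.A, if N.tail a = v then f a else 0)

/-- An `u`–`v` flow: zero excess away from `u` and `v`. -/
def IsFlow (u v : N.V) (f : N.A → ℝ) : Prop :=
  ∀ w : N.V, w ≠ u → w ≠ v → N.excess f w = 0

/-- The unit flow along a path: `1` on its arcs and `0` elsewhere. -/
noncomputable def unitFlow (l : List N.A) : N.A → ℝ :=
  fun a => if a ∈ l then 1 else 0

/-- The set of source/sink index pairs whose path passes through the arc `a`. -/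
def arcPattern (P : Fin k → Fin k → List N.A) (a : N.A) : Finset (Fin k × Fin k) :=
  Finset.univ.filter (fun q => a ∈ P q.1 q.2)

/-- `S_N`, the family of index-pair patterns of the arcs of `N`. -/
def SN (P : Fin k → Fin k → List N.A) : Set (Finset (Fin k × Fin k)) :=
  {T | ∃ a : N.A, T = N.arcPattern P a}

/-! ### Segments and longest common segments -/

/-- A segment: a start vertex together with a (possibly empty) chained list of
arcs starting there.  A segment with no arcs is a single vertex. -/
def IsSeg (s : N.V × List N.A) : Prop :=
  s.2.Chain' (fun a b => N.head a = N.tail b) ∧ ∀ a ∈ s.2.head?, N.tail a = s.1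

/-- The vertices of a segment. -/
def segVerts (s : N.V × List N.A) : Set N.V :=
  insert s.1 (N.pathVerts s.2)

/-- The final vertex of a segment. -/
def segEnd (s : N.V × List N.A) : N.V :=
  s.2.getLast?.elim s.1 N.head

/-- The segment `s` lies on the path `p`. -/
def SegOn (s : N.V × List N.A) (p : List N.A) : Prop :=
  s.2 <:+: p ∧ s.1 ∈ N.pathVerts p

/-- The segment `s` is contained in the segment `s'`. -/
def SegLE (s s' : N.V × List N.A) : Prop :=
  s.2 <:+: s'.2 ∧ s.1 ∈ N.segVerts s'

/-- `s` is a longest common segment (l.c.s.) of the set of paths `ps`: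
it is a segment common to all paths of `ps`, and no segment properly
containing it is common to all paths of `ps`. -/
def IsLCS (ps : Set (List N.A)) (s : N.V × List N.A) : Prop :=
  N.IsSeg s ∧ (∀ p ∈ ps, N.SegOn s p) ∧
    ∀ s' : N.V × List N.A, N.IsSeg s' → N.SegLE s s' → s' ≠ s →
      ∃ p ∈ ps, ¬ N.SegOn s' p

/-- `s` is an l.c.s. of some pair `{P i j₁, P i' j₂}` and lies on `p`. -/
def IsPairLCSOn (P : Fin k → Fin k → List N.A) (j₁ j₂ : Fin k)
    (p : List N.A) (s : N.V × List N.A) : Prop :=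
  (∃ i i' : Fin k, N.IsLCS {P i j₁, P i' j₂} s) ∧ N.SegOn s p

/-- `ℓ^{j₁,j₂}(p)`: the number of l.c.s.'s of pairs `{P i j₁, P i' j₂}` lying
on the path `p`. -/
noncomputable def lcsCount (P : Fin k → Fin k → List N.A) (j₁ j₂ : Fin k)
    (p : List N.A) : ℕ :=
  Nat.card {s : N.V × List N.A | N.IsPairLCSOn P j₁ j₂ p s}

/-- `m_{j₁,j₂}^c = {i : ℓ^{j₁,j₂}(P_{s_i,t_c}) = 1}`. -/
def mset (P : Fin k → Fin k → List N.A) (j₁ j₂ c : Fin k) : Set (Fin k) :=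
  {i | N.lcsCount P j₁ j₂ (P i c) = 1}

/-- `u` lies strictly before `v` along the path `p` (there is a nonempty
infix of `p` going from `u` to `v`). -/
def StrictlyBeforeOn (p : List N.A) (u v : N.V) : Prop :=
  ∃ l : List N.A, l <:+: p ∧ l.head?.map N.tail = some u ∧ l.getLast?.map N.head = some v

/-- `e 0, …, e (L-1)` enumerates, in the order along `p`, the l.c.s.'s
`p(1) < p(2) < ⋯ < p(L)` of pairs `{P i j₁, P i' j₂}` lying on `p`. -/
def IsLCSEnum (P : Fin k → Fin k → List N.A) (j₁ j₂ : Fin k) (p : List N.A)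
    (e : ℕ → N.V × List N.A) (L : ℕ) : Prop :=
  (∀ n, n < L → N.IsPairLCSOn P j₁ j₂ p (e n)) ∧
  (∀ s, N.IsPairLCSOn P j₁ j₂ p s → ∃ n, n < L ∧ e n = s) ∧
  (∀ m n, m < n → n < L → N.StrictlyBeforeOn p (N.segEnd (e m)) (e n).1)

/-! ### Residual networks, regular cycles, semi-cycles and crossings -/

/-- `a` is a `P_{t_j}`-arc. -/
def isPArc (P : Fin k → Fin k → List N.A) (j : Fin k) (a : N.A) : Prop :=
  ∃ i, a ∈ P i j

/-- The tail of `a` in the `j`-th residual network `N_j` (in which all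
`P_{t_j}`-arcs are reversed). -/
def rtail (P : Fin k → Fin k → List N.A) (j : Fin k) (a : N.A) : N.V :=
  if ∃ i, a ∈ P i j then N.head a else N.tail a

/-- The head of `a` in the `j`-th residual network `N_j`. -/
def rhead (P : Fin k → Fin k → List N.A) (j : Fin k) (a : N.A) : N.V :=
  if ∃ i, a ∈ P i j then N.tail a else N.head a

/-- `l` is a directed cycle of the residual network `N_j`. -/
def IsResidCycle (P : Fin k → Fin k → List N.A) (j : Fin k) (l : List N.A) : Prop :=
  l ≠ [] ∧ l.Nodup ∧
  l.Chain' (fun a b => N.rhead P j a = N.rtail P j b) ∧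
  (∀ a ∈ l.getLast?, ∀ b ∈ l.head?, N.rhead P j a = N.rtail P j b) ∧
  (l.map (N.rtail P j)).Nodup

/-- A regular cycle of `N_j`: a directed cycle of `N_j` having no isolated
vertex of `P_{t_j}`, i.e. every vertex of the cycle lying on a path of
`P_{t_j}` is incident in the cycle to some (reversed) `P_{t_j}`-arc. -/
def IsRegularCycle (P : Fin k → Fin k → List N.A) (j : Fin k) (l : List N.A) : Prop :=
  N.IsResidCycle P j l ∧
    ∀ v ∈ l.map (N.rtail P j),
      (∃ i, v ∈ N.pathVerts (P i j)) →
      ∃ a ∈ l, N.isPArc P j a ∧ (v = N.tail a ∨ v = N.head a)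

/-- A `P_{t_j}`-semi-cycle of `N`: the arc set of a regular cycle of `N_j`,
with the original orientations of `N` restored. -/
def IsSemiCycle (P : Fin k → Fin k → List N.A) (j : Fin k) (E : Set N.A) : Prop :=
  ∃ l : List N.A, N.IsRegularCycle P j l ∧ E = {a | a ∈ l}

/-- A `P_{t_j}`-crossing of `N`: a `P_{t_j}`-semi-cycle with all its
`P_{t_j}`-arcs removed. -/
def IsCrossing (P : Fin k → Fin k → List N.A) (j : Fin k) (E : Set N.A) : Prop :=
  ∃ l : List N.A, N.IsRegularCycle P j l ∧ E = {a | a ∈ l ∧ ¬ N.isPArc P j a}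

end KPairNetwork

namespace KPairNetwork

variable {k : ℕ} {N : KPairNetwork k}

lemma pathVerts_subset_of_infix {l l' : List N.A} (h : l <:+: l') :
    N.pathVerts l ⊆ N.pathVerts l' :=
  fun _ ⟨a, ha, hv⟩ => ⟨a, h.subset ha, hv⟩

lemma SegOn.segVerts_subset {s : N.V × List N.A} {p : List N.A} (h : N.SegOn s p) :
    N.segVerts s ⊆ N.pathVerts p :=
  Set.insert_subset h.2 (pathVerts_subset_of_infix h.1)

lemma segLE_refl (s : N.V × List N.A) : N.SegLE s s :=
  ⟨List.infix_refl _, Set.mem_insert _ _⟩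

lemma SegLE.trans {s s' s'' : N.V × List N.A} (h : N.SegLE s s') (h' : N.SegLE s' s'') :
    N.SegLE s s'' := by
  refine ⟨h.1.trans h'.1, ?_⟩
  rcases h.2 with h2 | h2
  · exact h2 ▸ h'.2
  · exact Set.mem_insert_of_mem _ (pathVerts_subset_of_infix h'.1 h2)

lemma SegLE.eq_of_length_le {s s' : N.V × List N.A} (hs : N.IsSeg s) (hs' : N.IsSeg s')
    (h : N.SegLE s s') (hlen : s'.2.length ≤ s.2.length) : s' = s := by
  have harcs : s.2 = s'.2 := h.1.sublist.eq_of_length_le hlen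
  refine Prod.ext ?_ harcs.symm
  rcases hl : s.2 with _ | ⟨a, t⟩
  · rcases h.2 with hv | ⟨b, hb, -⟩
    · exact hv.symm
    · simp [← harcs, hl] at hb
  · rw [← hs.2 a (by simp [hl]), ← hs'.2 a (by simp [← harcs, hl])]

lemma exists_isLCS_of_segOn {p q : List N.A} {s : N.V × List N.A} (hs : N.IsSeg s)
    (hp : N.SegOn s p) (hq : N.SegOn s q) : ∃ t, N.IsLCS {p, q} t ∧ N.SegLE s t := by
  induction hn : p.length - s.2.length using Nat.strong_induction_on generalizing s with
  | _ n ih =>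
  have hcommon : ∀ r ∈ ({p, q} : Set (List N.A)), N.SegOn s r := by
    rintro r (rfl | rfl)
    exacts [hp, hq]
  by_cases hmax : ∀ s', N.IsSeg s' → N.SegLE s s' → s' ≠ s →
      ∃ r ∈ ({p, q} : Set (List N.A)), ¬ N.SegOn s' r
  · exact ⟨s, ⟨hs, hcommon, hmax⟩, segLE_refl s⟩
  push Not at hmax
  obtain ⟨s', hs', hle, hne, hall⟩ := hmax
  have hp' := hall p (Set.mem_insert _ _)
  have hlonger : s.2.length < s'.2.length :=
    lt_of_not_ge fun hc => hne (hle.eq_of_length_le hs hs' hc)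
  have hfits := hp'.1.length_le
  obtain ⟨t, ht, hle'⟩ := ih _ (by omega) hs' hp' (hall q (by simp)) rfl
  exact ⟨t, ht, hle.trans hle'⟩

lemma IsSeg.tail_eq_or_exists_head_eq {s : N.V × List N.A} (hs : N.IsSeg s) :
    ∀ a ∈ s.2, N.tail a = s.1 ∨ ∃ a' ∈ s.2, N.head a' = N.tail a := by
  obtain ⟨u, l⟩ := s
  induction l generalizing u with
  | nil => simp
  | cons x xs ih =>
    obtain ⟨hchain, hstart⟩ := hs
    intro a ha
    rcases List.mem_cons.mp ha with rfl | ha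
    · exact Or.inl (hstart a rfl)
    · rcases xs with _ | ⟨y, ys⟩
      · simp at ha
      obtain ⟨hxy, hchain'⟩ := List.isChain_cons_cons.mp hchain
      rcases ih (N.head x) ⟨hchain', by simp [hxy]⟩ a ha with h | ⟨a', ha', h⟩
      · exact Or.inr ⟨x, List.mem_cons_self, h.symm⟩
      · exact Or.inr ⟨a', List.mem_cons_of_mem _ ha', h⟩

lemma IsPathFrom.isSeg {u v : N.V} {l : List N.A} (h : N.IsPathFrom u v l) :
    N.IsSeg (u, l) :=
  ⟨h.2.1, h.2.2.1⟩

lemma IsPathFrom.start_mem_pathVerts {u v : N.V} {l : List N.A} (h : N.IsPathFrom u v l) :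
    u ∈ N.pathVerts l := by
  obtain ⟨a, t, rfl⟩ := List.exists_cons_of_ne_nil h.1
  exact ⟨a, List.mem_cons_self, Or.inl (h.2.2.1 a rfl).symm⟩

lemma IsPathFrom.src_notMem_pathVerts {b x : Fin k} {v : N.V} {l : List N.A}
    (h : N.IsPathFrom (N.src b) v l) (hxb : x ≠ b) : N.src x ∉ N.pathVerts l := by
  rintro ⟨a, ha, hx | hx⟩
  · rcases h.isSeg.tail_eq_or_exists_head_eq a ha with h' | ⟨a', -, h'⟩
    · exact hxb (N.src_inj (hx.trans h'))
    · exact N.src_no_in x a' (h'.trans hx.symm)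
  · exact N.src_no_in x a hx.symm

lemma IsPairLCSOn.eq_of_lcsCount_eq_one {P : Fin k → Fin k → List N.A} {j₁ j₂ : Fin k}
    {p : List N.A} {s s' : N.V × List N.A} (hcount : N.lcsCount P j₁ j₂ p = 1)
    (hs : N.IsPairLCSOn P j₁ j₂ p s) (hs' : N.IsPairLCSOn P j₁ j₂ p s') : s = s' := by
  obtain ⟨x, hx⟩ := Nat.card_eq_one_iff_exists.mp hcount
  exact congrArg Subtype.val ((hx ⟨s, hs⟩).trans (hx ⟨s', hs'⟩).symm)

lemma disjoint_pathVerts_of_lcsCount_eq_one {P : Fin k → Fin k → List N.A}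
    (hpaths : ∀ i j, N.IsPathFrom (N.src i) (N.snk j) (P i j)) {i j b : Fin k}
    (hcount : N.lcsCount P i j (P j i) = 1) (hb : b ≠ j) :
    Disjoint (N.pathVerts (P j i)) (N.pathVerts (P b j)) := by
  have hpoint : ∀ w : N.V, N.IsSeg (w, []) := fun _ => ⟨List.isChain_nil, by simp⟩
  refine Set.disjoint_left.mpr fun v hv hv' => ?_
  obtain ⟨t₀, ht₀, hsrc⟩ := exists_isLCS_of_segOn (hpoint (N.src j))
    ⟨List.nil_infix, (hpaths j i).start_mem_pathVerts⟩
    ⟨List.nil_infix, (hpaths j j).start_mem_pathVerts⟩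
  obtain ⟨t₁, ht₁, -⟩ := exists_isLCS_of_segOn (hpoint v)
    ⟨List.nil_infix, hv⟩ ⟨List.nil_infix, hv'⟩
  have heq : t₀ = t₁ := IsPairLCSOn.eq_of_lcsCount_eq_one hcount
    ⟨⟨j, j, ht₀⟩, ht₀.2.1 _ (Set.mem_insert _ _)⟩ ⟨⟨j, b, ht₁⟩, ht₁.2.1 _ (Set.mem_insert _ _)⟩
  have hon : N.SegOn t₁ (P b j) := ht₁.2.1 _ (by simp)
  exact (hpaths b j).src_notMem_pathVerts hb.symm (hon.segVerts_subset (heq ▸ hsrc.2))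

lemma eq_of_mem_of_mem_mset {P : Fin k → Fin k → List N.A}
    (hpaths : ∀ i j, N.IsPathFrom (N.src i) (N.snk j) (P i j)) {i c b : Fin k}
    (hc : c ∈ N.mset P i c i) {a : N.A} (ha : a ∈ P c i) (ha' : a ∈ P b c) : b = c := by
  by_contra hb
  exact Set.disjoint_left.mp (disjoint_pathVerts_of_lcsCount_eq_one hpaths hc hb)
    ⟨a, ha, Or.inl rfl⟩ ⟨a, ha', Or.inl rfl⟩

lemma exists_mem_of_card_arcPattern_eq {P : Fin k → Fin k → List N.A}
    (hdisj : ∀ (j i i' : Fin k), i ≠ i' → ∀ a : N.A, a ∈ P i j → a ∉ P i' j) {a : N.A}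
    (hcard : (N.arcPattern P a).card = k) (d : Fin k) : ∃ x, a ∈ P x d := by
  have hinj : Set.InjOn Prod.snd (N.arcPattern P a : Set (Fin k × Fin k)) := by
    rintro ⟨x, d⟩ hx ⟨x', d'⟩ hx' (rfl : d = d')
    by_contra hne
    rw [Finset.mem_coe, arcPattern, Finset.mem_filter] at hx hx'
    exact hdisj d x x' (fun h => hne (by rw [h])) a hx.2 hx'.2
  have himage : (N.arcPattern P a).image Prod.snd = Finset.univ :=
    Finset.eq_univ_of_card _ (by rw [Finset.card_image_of_injOn hinj, hcard, Fintype.card_fin])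
  obtain ⟨⟨x, d'⟩, hx, rfl⟩ := Finset.mem_image.mp (himage ▸ Finset.mem_univ d)
  exact ⟨x, (Finset.mem_filter.mp hx).2⟩

lemma exists_fixed_of_forall_mem {N : KPairNetwork 3} {P : Fin 3 → Fin 3 → List N.A}
    (hpaths : ∀ i j, N.IsPathFrom (N.src i) (N.snk j) (P i j)) {i j l : Fin 3}
    (hij : i ≠ j) (hil : i ≠ l) (hjl : j ≠ l)
    (h₁ : j ∈ N.mset P i j i) (h₂ : l ∈ N.mset P i l i)
    {a : N.A} (X : Fin 3 → Fin 3) (hX : ∀ d, a ∈ P (X d) d) : ∃ d, X d = d := by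
  by_contra! hfree
  have hother : ∀ x : Fin 3, x ≠ i → x = j ∨ x = l := by
    intro x hx
    omega
  rcases hother (X i) (hfree i) with hXi | hXi
  · exact hfree j (eq_of_mem_of_mem_mset hpaths h₁ (hXi ▸ hX i) (hX j))
  · exact hfree l (eq_of_mem_of_mem_mset hpaths h₂ (hXi ▸ hX i) (hX l))

end KPairNetwork

/-- Case 1.2 of the proof of the main theorem: in a stable
3-pair network, if `j ∈ m_{i,j}^i` and `l ∈ m_{i,l}^i` for pairwise distinct
`i, j, l`, then every `s ∈ S_N` with `α(s) = 3` contains a diagonal element;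
equivalently, if one arc carries three paths `P_{s_{l₁},t_1}`,
`P_{s_{l₂},t_2}`, `P_{s_{l₃},t_3}` then `l_m = m` for some `m`. -/
theorem statement14 (N : KPairNetwork 3) (P : Fin 3 → Fin 3 → List N.A)
    (hP : N.IsStableSystem P)
    (i j l : Fin 3) (hij : i ≠ j) (hil : i ≠ l) (hjl : j ≠ l)
    (h₁ : j ∈ N.mset P i j i) (h₂ : l ∈ N.mset P i l i) :
    (∀ T ∈ N.SN P, T.card = 3 → ∃ m : Fin 3, (m, m) ∈ T) ∧
    ∀ (a : N.A) (l₁ l₂ l₃ : Fin 3),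
      a ∈ P l₁ 0 → a ∈ P l₂ 1 → a ∈ P l₃ 2 →
      l₁ = 0 ∨ l₂ = 1 ∨ l₃ = 2 := by
  obtain ⟨⟨hpaths, hdisj⟩, -⟩ := hP
  constructor
  · rintro T ⟨a, rfl⟩ hcard
    choose X hX using KPairNetwork.exists_mem_of_card_arcPattern_eq hdisj hcard
    obtain ⟨d, hd⟩ := KPairNetwork.exists_fixed_of_forall_mem hpaths hij hil hjl h₁ h₂ X hX
    exact ⟨d, Finset.mem_filter.mpr ⟨Finset.mem_univ _, by simpa only [hd] using hX d⟩⟩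
  · intro a l₁ l₂ l₃ ha₁ ha₂ ha₃
    obtain ⟨d, hd⟩ := KPairNetwork.exists_fixed_of_forall_mem hpaths hij hil hjl h₁ h₂
      ![l₁, l₂, l₃] (by intro d; fin_cases d <;> assumption)
    fin_cases d
    · exact Or.inl hd
    · exact Or.inr (Or.inl hd)
    · exact Or.inr (Or.inr hd)
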